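/- arXiv:1605.06254 — 2 statements merged into one kernel-verified Lean document; each statement's English description precedes it below -/
import Mathlib

section
/- Let p(φ) = a₀ + a₂cos(2φ) + b₂sin(2φ) be the support function of a closed convex curve C (so p + p'' > 0 everywhere) of length L = ∫₀^{2π} p dφ. Let e(φ) = (−p'(φ)sin φ − p''(φ)cos φ, p'(φ)cos φ − p''(φ)sin φ) be the evolute of C, and let c(φ) = (q(φ)cos φ − q'(φ)sin φ, q(φ)sin φ + q'(φ)cos φ) with q = p − L/(2π) be the interior parallel curve to C at distance L/(2π). Then the evolute and the parallel curve are similar with ratio 2: there exists an angle θ such that the image of e equals the image of c under the rotation by θ about the origin followed by the homothety of ratio 2 centered at the origin. -/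
open Real

/-!
The evolute of the curve with support function `p` is, up to a quarter turn of the parameter, the
curve with generalized support function `ψ ↦ -p'(ψ + π/2)`. For `p = a₀ + h` with
`h(x) = a₂ cos 2x + b₂ sin 2x` this function is `ψ ↦ 2 h(ψ + π/4)`, and shifting the argument of a
support function by `α` rotates its curve by `-α`. Since `L = 2π a₀`, the parallel curve is exactly
the curve of `h`, so the evolute is twice its rotation by `-π/4`, reparametrized by `φ ↦ φ - π/4`.
-/

noncomputable section

def supportCurve (h : ℝ → ℝ) (φ : ℝ) : ℝ × ℝ :=
  (h φ * cos φ - deriv h φ * sin φ, h φ * sin φ + deriv h φ * cos φ)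

def rotate (θ : ℝ) (v : ℝ × ℝ) : ℝ × ℝ :=
  (v.1 * cos θ - v.2 * sin θ, v.1 * sin θ + v.2 * cos θ)

def evolute (p : ℝ → ℝ) (φ : ℝ) : ℝ × ℝ :=
  (-(deriv p φ) * sin φ - deriv (deriv p) φ * cos φ,
    deriv p φ * cos φ - deriv (deriv p) φ * sin φ)

def secondHarmonic (a b x : ℝ) : ℝ := a * cos (2 * x) + b * sin (2 * x)

end

theorem supportCurve_const_mul (k : ℝ) (h : ℝ → ℝ) (φ : ℝ) :
    supportCurve (fun x => k * h x) φ = k • supportCurve h φ := by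
  simp only [supportCurve, deriv_const_mul_field', Prod.smul_mk, smul_eq_mul]
  congr 1 <;> ring

theorem supportCurve_comp_add_const (h : ℝ → ℝ) (α φ : ℝ) :
    supportCurve (fun x => h (x + α)) φ = rotate (-α) (supportCurve h (φ + α)) := by
  simp only [supportCurve, rotate, deriv_comp_add_const, cos_add, sin_add, cos_neg, sin_neg]
  refine Prod.ext ?_ ?_
  · linear_combination -(h (φ + α) * cos φ - deriv h (φ + α) * sin φ) * sin_sq_add_cos_sq α
  · linear_combination -(h (φ + α) * sin φ + deriv h (φ + α) * cos φ) * sin_sq_add_cos_sq α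

theorem evolute_eq_supportCurve (p : ℝ → ℝ) (φ : ℝ) :
    evolute p φ = supportCurve (fun ψ => -deriv p (ψ + π / 2)) (φ - π / 2) := by
  simp only [evolute, supportCurve, deriv.fun_neg, deriv_comp_add_const, sub_add_cancel,
    cos_sub_pi_div_two, sin_sub_pi_div_two]
  congr 1 <;> ring

theorem hasDerivAt_secondHarmonic (a b x : ℝ) :
    HasDerivAt (secondHarmonic a b) (2 * secondHarmonic b (-a) x) x := by
  have h2 : HasDerivAt (fun x : ℝ => 2 * x) 2 x := by simpa using (hasDerivAt_id x).const_mul 2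
  refine ((((hasDerivAt_cos _).comp x h2).const_mul a).add
    (((hasDerivAt_sin _).comp x h2).const_mul b)).congr_deriv ?_
  simp only [secondHarmonic]
  ring

theorem secondHarmonic_add_pi_div_four (a b x : ℝ) :
    secondHarmonic a b (x + π / 4) = secondHarmonic b (-a) x := by
  simp only [secondHarmonic, show 2 * (x + π / 4) = 2 * x + π / 2 by ring, cos_add_pi_div_two,
    sin_add_pi_div_two]
  ring

theorem secondHarmonic_add_pi_div_two (a b x : ℝ) :
    secondHarmonic a b (x + π / 2) = -secondHarmonic a b x := by
  simp only [secondHarmonic, show 2 * (x + π / 2) = 2 * x + π by ring, cos_add_pi, sin_add_pi]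
  ring

theorem integral_const_add_secondHarmonic (a₀ a b : ℝ) :
    ∫ x in (0 : ℝ)..(2 * π), a₀ + secondHarmonic a b x = 2 * π * a₀ := by
  have hF : ∀ x, HasDerivAt (fun x => a₀ * x + secondHarmonic (-b / 2) (a / 2) x)
      (a₀ + secondHarmonic a b x) x := fun x => by
    refine (((hasDerivAt_id x).const_mul a₀).add (hasDerivAt_secondHarmonic _ _ x)).congr_deriv ?_
    simp only [secondHarmonic]
    ring
  have hcont : Continuous fun x => a₀ + secondHarmonic a b x := by
    unfold secondHarmonic
    fun_prop
  rw [intervalIntegral.integral_eq_sub_of_hasDerivAt (fun x _ => hF x)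
    (hcont.intervalIntegrable _ _)]
  simp only [secondHarmonic, two_mul (2 * π), cos_add_two_pi, sin_add_two_pi, cos_two_pi,
    sin_two_pi, mul_zero, cos_zero, sin_zero]
  ring

theorem evolute_const_add_secondHarmonic (a₀ a b φ : ℝ) :
    evolute (fun x => a₀ + secondHarmonic a b x) φ =
      (2 : ℝ) • rotate (-(π / 4)) (supportCurve (secondHarmonic a b) (φ - π / 4)) := by
  have hderiv : ∀ ψ, -deriv (fun x => a₀ + secondHarmonic a b x) (ψ + π / 2) =
      2 * secondHarmonic a b (ψ + π / 4) := fun ψ => by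
    rw [deriv_const_add, (hasDerivAt_secondHarmonic a b _).deriv, secondHarmonic_add_pi_div_two,
      secondHarmonic_add_pi_div_four]
    ring
  rw [evolute_eq_supportCurve, funext hderiv, supportCurve_const_mul,
    supportCurve_comp_add_const, show φ - π / 2 + π / 4 = φ - π / 4 by ring]

theorem evolute_similar_parallel_curve_ratio_two_general
    (a₀ a₂ b₂ : ℝ) (p q : ℝ → ℝ) (L : ℝ) (e c : ℝ → ℝ × ℝ)
    (hp : ∀ φ, p φ = a₀ + a₂ * Real.cos (2 * φ) + b₂ * Real.sin (2 * φ))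
    (hL : L = ∫ φ in (0:ℝ)..(2 * π), p φ)
    (he : ∀ φ, e φ =
      (-(deriv p φ) * Real.sin φ - deriv (deriv p) φ * Real.cos φ,
        deriv p φ * Real.cos φ - deriv (deriv p) φ * Real.sin φ))
    (hq : ∀ φ, q φ = p φ - L / (2 * π))
    (hc : ∀ φ, c φ =
      (q φ * Real.cos φ - deriv q φ * Real.sin φ,
        q φ * Real.sin φ + deriv q φ * Real.cos φ)) :
    ∃ θ : ℝ,
      Set.range e =
        Set.range fun φ : ℝ =>
          ((2 * ((c φ).1 * Real.cos θ - (c φ).2 * Real.sin θ),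
            2 * ((c φ).1 * Real.sin θ + (c φ).2 * Real.cos θ)) : ℝ × ℝ) := by
  have hp' : p = fun x => a₀ + secondHarmonic a₂ b₂ x :=
    funext fun φ => (hp φ).trans (add_assoc _ _ _)
  have hL' : L = 2 * π * a₀ := by
    rw [hL, hp']
    exact integral_const_add_secondHarmonic a₀ a₂ b₂
  have hq' : q = secondHarmonic a₂ b₂ := funext fun φ => by
    rw [hq, hp, hL', mul_div_cancel_left₀ a₀ two_pi_pos.ne']
    unfold secondHarmonic
    ring
  have hc' : c = supportCurve q := funext hc
  have he' : ∀ φ, e φ = (2 : ℝ) • rotate (-(π / 4)) (c (φ - π / 4)) := fun φ => by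
    rw [show e φ = evolute p φ from he φ, hp', evolute_const_add_secondHarmonic, hc', hq']
  refine ⟨-(π / 4), ?_⟩
  rw [show e = (fun φ => (2 : ℝ) • rotate (-(π / 4)) (c φ)) ∘ (· - π / 4) from funext he']
  exact (Equiv.subRight (π / 4)).surjective.range_comp _

/-- Proposition 5.1: for a closed convex curve with support function
`p(φ) = a₀ + a₂ cos 2φ + b₂ sin 2φ`, the evolute and the interior parallel
curve at distance `L/(2π)` are similar with ratio `2`. -/
theorem evolute_similar_parallel_curve_ratio_two
    (a₀ a₂ b₂ : ℝ) (p q : ℝ → ℝ) (L : ℝ) (e c : ℝ → ℝ × ℝ)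
    (hp : ∀ φ, p φ = a₀ + a₂ * Real.cos (2 * φ) + b₂ * Real.sin (2 * φ))
    (hconv : ∀ φ, p φ + deriv (deriv p) φ > 0)
    (hL : L = ∫ φ in (0:ℝ)..(2 * π), p φ)
    (he : ∀ φ, e φ =
      (-(deriv p φ) * Real.sin φ - deriv (deriv p) φ * Real.cos φ,
        deriv p φ * Real.cos φ - deriv (deriv p) φ * Real.sin φ))
    (hq : ∀ φ, q φ = p φ - L / (2 * π))
    (hc : ∀ φ, c φ =
      (q φ * Real.cos φ - deriv q φ * Real.sin φ,
        q φ * Real.sin φ + deriv q φ * Real.cos φ)) :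
    ∃ θ : ℝ,
      Set.range e =
        Set.range fun φ : ℝ =>
          ((2 * ((c φ).1 * Real.cos θ - (c φ).2 * Real.sin θ),
            2 * ((c φ).1 * Real.sin θ + (c φ).2 * Real.cos θ)) : ℝ × ℝ) :=
  evolute_similar_parallel_curve_ratio_two_general a₀ a₂ b₂ p q L e c hp hL he hq hc
end

section
/- Let p : ℝ → ℝ be a 2π-periodic function of class C² satisfying ∫₀^{2π} p(φ)cos φ dφ = 0 and ∫₀^{2π} p(φ)sin φ dφ = 0. Set F = ½∫₀^{2π}(p² − p'²) dφ, A = ½∫₀^{2π} p² dφ and F_e = ½∫₀^{2π} p'² dφ − ½∫₀^{2π} p''² dφ. Then A − F ≤ (1/3)|F_e|; equivalently, ∫₀^{2π} p''(φ)² dφ ≥ 4∫₀^{2π} p'(φ)² dφ. -/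
/-!
Since `A - F = ½ ∫ p'²` and `F_e = ½ ∫ p'² - ½ ∫ p''²`, both claims reduce to the Wirtinger-type
inequality `∫ p''² ≥ 4 ∫ p'²`. Integrating by parts, `p'` is orthogonal to `1`, `cos` and `sin`
because `p` is periodic and orthogonal to `cos` and `sin`; so the Fourier coefficients `cₙ` of
`p'` vanish for `|n| ≤ 1`, and Parseval's identity applied to `p'` and to `p''`, whose coefficients
are `i n cₙ`, gives the inequality.
-/
open Real MeasureTheory Set intervalIntegral Complex

theorem Function.Periodic.deriv {𝕜 F : Type*} [NontriviallyNormedField 𝕜] [NormedAddCommGroup F]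
    [NormedSpace 𝕜 F] {f : 𝕜 → F} {c : 𝕜} (hf : Function.Periodic f c) :
    Function.Periodic (deriv f) c := fun x => by
  rw [← deriv_comp_add_const, show (fun y => f (y + c)) = f from funext hf]

theorem Continuous.memLp_two_restrict_Ioc {E : Type*} [NormedAddCommGroup E] {f : ℝ → E}
    (hf : Continuous f) (a b : ℝ) :
    MemLp f 2 (volume.restrict (Ioc a b)) :=
  (memLp_two_iff_integrable_sq_norm hf.aestronglyMeasurable).mpr
    ((hf.norm.pow 2).integrableOn_Ioc)

theorem fourierCoeffOn_derivative_of_endpoints_eq {a b : ℝ} (hab : a < b) {f f' : ℝ → ℂ}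
    (hf : ∀ x ∈ uIcc a b, HasDerivAt f (f' x) x) (hf' : IntervalIntegrable f' volume a b)
    (hfab : f b = f a) (n : ℤ) :
    fourierCoeffOn hab f' n = 2 * π * I * n / (b - a) * fourierCoeffOn hab f n := by
  rcases eq_or_ne n 0 with rfl | hn
  · rw [fourierCoeffOn_eq_integral]
    simp only [neg_zero, fourier_zero, one_smul, integral_eq_sub_of_hasDerivAt hf hf', hfab]
    simp
  · have hba : ((b - a : ℝ) : ℂ) ≠ 0 := ofReal_ne_zero.mpr (sub_pos.mpr hab).ne'
    rw [fourierCoeffOn_of_hasDerivAt hab hn hf hf', hfab, sub_self, mul_zero, zero_sub]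
    have : (π : ℂ) ≠ 0 := ofReal_ne_zero.mpr pi_ne_zero
    have : (n : ℂ) ≠ 0 := Int.cast_ne_zero.mpr hn
    push_cast at hba ⊢
    field_simp

theorem sq_mul_integral_norm_sq_le_of_fourierCoeffOn_eq_zero {a b : ℝ} (hab : a < b)
    {f f' : ℝ → ℂ} (hf : ∀ x, HasDerivAt f (f' x) x) (hf' : Continuous f') (hfab : f b = f a)
    {k : ℕ} (hk : ∀ n : ℤ, n.natAbs < k → fourierCoeffOn hab f n = 0) :
    (2 * π * k / (b - a)) ^ 2 * ∫ x in a..b, ‖f x‖ ^ 2 ≤ ∫ x in a..b, ‖f' x‖ ^ 2 := by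
  have hba : 0 < b - a := sub_pos.mpr hab
  have hf_cont : Continuous f := continuous_iff_continuousAt.mpr fun x => (hf x).continuousAt
  have hpar := hasSum_sq_fourierCoeffOn hab (hf_cont.memLp_two_restrict_Ioc a b)
  have hpar' := hasSum_sq_fourierCoeffOn hab (hf'.memLp_two_restrict_Ioc a b)
  have hterm : ∀ n : ℤ, (2 * π * k / (b - a)) ^ 2 * ‖fourierCoeffOn hab f n‖ ^ 2 ≤
      ‖fourierCoeffOn hab f' n‖ ^ 2 := by
    intro n
    rw [fourierCoeffOn_derivative_of_endpoints_eq hab (fun x _ => hf x)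
      (hf'.intervalIntegrable a b) hfab n]
    rcases lt_or_ge n.natAbs k with hn | hn
    · simp [hk n hn]
    · have hkn : (k : ℝ) ≤ |(n : ℝ)| := by
        rw [← Int.cast_abs, ← Nat.cast_natAbs]; exact_mod_cast hn
      have hnorm : ‖2 * π * I * n / (b - a)‖ = 2 * π * |(n : ℝ)| / (b - a) := by
        rw [norm_div, ← ofReal_sub, norm_real, Real.norm_of_nonneg hba.le]
        simp [abs_of_pos pi_pos]
      rw [norm_mul, mul_pow, hnorm]
      gcongr
  have hle := hasSum_le hterm (hpar.mul_left _) hpar'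
  simp only [smul_eq_mul] at hle
  rw [mul_left_comm] at hle
  exact le_of_mul_le_mul_left hle (inv_pos.mpr hba)

theorem fourierCoeffOn_ofReal_eq {g : ℝ → ℝ} (hg : IntervalIntegrable g volume 0 (2 * π))
    (n : ℤ) :
    fourierCoeffOn two_pi_pos (fun x => (g x : ℂ)) n =
      ((∫ x in (0)..(2 * π), g x * Real.cos (n * x) : ℝ) -
        I * (∫ x in (0)..(2 * π), g x * Real.sin (n * x) : ℝ)) / (2 * π) := by
  have hexp : ∀ x : ℝ, fourier (-n) (x : AddCircle (2 * π)) =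
      (Real.cos (n * x) : ℂ) - I * Real.sin (n * x) := by
    intro x
    rw [fourier_coe_apply]
    have : (π : ℂ) ≠ 0 := ofReal_ne_zero.mpr pi_ne_zero
    rw [show 2 * π * I * ((-n : ℤ) : ℂ) * x / (2 * π : ℝ) = (-(n * x : ℝ) : ℂ) * I by
      push_cast; field_simp]
    rw [exp_mul_I, Complex.cos_neg, Complex.sin_neg]
    push_cast
    ring
  have hcos : IntervalIntegrable (fun x => ((g x * Real.cos (n * x) : ℝ) : ℂ)) volume 0 (2 * π) :=
    have h := hg.mul_continuousOn
      (Real.continuous_cos.comp (continuous_const_mul (n : ℝ))).continuousOn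
    ⟨h.1.ofReal, h.2.ofReal⟩
  have hsin : IntervalIntegrable (fun x => ((g x * Real.sin (n * x) : ℝ) : ℂ)) volume 0 (2 * π) :=
    have h := hg.mul_continuousOn
      (Real.continuous_sin.comp (continuous_const_mul (n : ℝ))).continuousOn
    ⟨h.1.ofReal, h.2.ofReal⟩
  have hintegrand : ∀ x : ℝ, fourier (-n) (x : AddCircle (2 * π)) • (g x : ℂ) =
      ((g x * Real.cos (n * x) : ℝ) : ℂ) - I * ((g x * Real.sin (n * x) : ℝ) : ℂ) := by
    intro x
    rw [hexp, smul_eq_mul]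
    push_cast
    ring
  rw [fourierCoeffOn_eq_integral, sub_zero]
  simp only [hintegrand]
  rw [integral_sub hcos (hsin.const_mul I), intervalIntegral.integral_const_mul, integral_ofReal,
    integral_ofReal, real_smul]
  push_cast
  ring

theorem four_mul_integral_sq_le_integral_deriv_sq {g : ℝ → ℝ} (hg : ContDiff ℝ 1 g)
    (hg_end : g (2 * π) = g 0) (hmean : ∫ x in (0)..(2 * π), g x = 0)
    (hcos : ∫ x in (0)..(2 * π), g x * Real.cos x = 0)
    (hsin : ∫ x in (0)..(2 * π), g x * Real.sin x = 0) :
    4 * ∫ x in (0)..(2 * π), g x ^ 2 ≤ ∫ x in (0)..(2 * π), deriv g x ^ 2 := by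
  have hcoeff : ∀ n : ℤ, n.natAbs < 2 →
      fourierCoeffOn two_pi_pos (fun x => (g x : ℂ)) n = 0 := by
    intro n hn
    rw [fourierCoeffOn_ofReal_eq (hg.continuous.intervalIntegrable _ _)]
    obtain rfl | rfl | rfl : n = -1 ∨ n = 0 ∨ n = 1 := by omega
    all_goals simp [hmean, hcos, hsin]
  have h := sq_mul_integral_norm_sq_le_of_fourierCoeffOn_eq_zero two_pi_pos
    (fun x => ((hg.differentiable one_ne_zero).differentiableAt.hasDerivAt).ofReal_comp)
    (continuous_ofReal.comp hg.continuous_deriv_one) (by simp [hg_end]) hcoeff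
  have hconst : 2 * π * ((2 : ℕ) : ℝ) / (2 * π - 0) = 2 := by
    rw [sub_zero, Nat.cast_ofNat]
    field_simp
  norm_num [hconst] at h
  exact h

theorem integral_deriv_mul_cos_eq_integral_mul_sin {p : ℝ → ℝ} (hp : ContDiff ℝ 1 p)
    (hp_end : p (2 * π) = p 0) :
    ∫ x in (0)..(2 * π), deriv p x * Real.cos x = ∫ x in (0)..(2 * π), p x * Real.sin x := by
  have h := integral_mul_deriv_eq_deriv_mul (a := 0) (b := 2 * π) (u := p) (v := Real.cos)
    (u' := deriv p) (v' := fun x => -Real.sin x)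
    (fun x _ => (hp.differentiable one_ne_zero).differentiableAt.hasDerivAt)
    (fun x _ => Real.hasDerivAt_cos x) (hp.continuous_deriv_one.intervalIntegrable _ _)
    (Real.continuous_sin.neg.intervalIntegrable _ _)
  simp only [mul_neg, intervalIntegral.integral_neg, hp_end, Real.cos_two_pi, Real.cos_zero,
    sub_self, zero_sub] at h
  linarith

theorem integral_deriv_mul_sin_eq_neg_integral_mul_cos {p : ℝ → ℝ} (hp : ContDiff ℝ 1 p) :
    ∫ x in (0)..(2 * π), deriv p x * Real.sin x = -∫ x in (0)..(2 * π), p x * Real.cos x := by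
  have h := integral_mul_deriv_eq_deriv_mul (a := 0) (b := 2 * π) (u := p) (v := Real.sin)
    (u' := deriv p) (v' := Real.cos)
    (fun x _ => (hp.differentiable one_ne_zero).differentiableAt.hasDerivAt)
    (fun x _ => Real.hasDerivAt_sin x) (hp.continuous_deriv_one.intervalIntegrable _ _)
    (Real.continuous_cos.intervalIntegrable _ _)
  simp only [Real.sin_two_pi, Real.sin_zero, mul_zero, sub_self, zero_sub] at h
  linarith

/-- Inequality (yyy): `A − F ≤ (1/3)|F_e|`; equivalently
`∫ p''² ≥ 4 ∫ p'²` when the origin is the Steiner point. -/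
theorem pedal_area_diff_le_third_evolute_area
    (p : ℝ → ℝ)
    (hper : Function.Periodic p (2 * π))
    (hC2 : ContDiff ℝ 2 p)
    (hcos : ∫ φ in (0:ℝ)..(2 * π), p φ * Real.cos φ = 0)
    (hsin : ∫ φ in (0:ℝ)..(2 * π), p φ * Real.sin φ = 0)
    (F A Fe : ℝ)
    (hF : F = (1 / 2) * ∫ φ in (0:ℝ)..(2 * π), (p φ ^ 2 - (deriv p φ) ^ 2))
    (hA : A = (1 / 2) * ∫ φ in (0:ℝ)..(2 * π), p φ ^ 2)
    (hFe : Fe = (1 / 2) * (∫ φ in (0:ℝ)..(2 * π), (deriv p φ) ^ 2) -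
            (1 / 2) * ∫ φ in (0:ℝ)..(2 * π), (deriv (deriv p) φ) ^ 2) :
    A - F ≤ (1 / 3) * |Fe| ∧
      (∫ φ in (0:ℝ)..(2 * π), (deriv (deriv p) φ) ^ 2) ≥
        4 * ∫ φ in (0:ℝ)..(2 * π), (deriv p φ) ^ 2 := by
  have hp : ContDiff ℝ 1 p := hC2.of_le one_le_two
  have hp' : ContDiff ℝ 1 (deriv p) := hC2.deriv' (n := 1)
  have hp_end : p (2 * π) = p 0 := by simpa using hper 0
  have hp'_end : deriv p (2 * π) = deriv p 0 := by simpa using hper.deriv 0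
  have hmean : ∫ φ in (0)..(2 * π), deriv p φ = 0 := by
    rw [integral_deriv_eq_sub (fun x _ => (hp.differentiable one_ne_zero).differentiableAt)
      (hp.continuous_deriv_one.intervalIntegrable _ _), hp_end, sub_self]
  have hW := four_mul_integral_sq_le_integral_deriv_sq hp' hp'_end hmean
    (by rw [integral_deriv_mul_cos_eq_integral_mul_sin hp hp_end, hsin])
    (by rw [integral_deriv_mul_sin_eq_neg_integral_mul_cos hp, hcos, neg_zero])
  refine ⟨?_, hW⟩
  have hAF : A - F = (1 / 2) * ∫ φ in (0)..(2 * π), deriv p φ ^ 2 := by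
    rw [hA, hF, integral_sub (f := fun φ => p φ ^ 2) (g := fun φ => deriv p φ ^ 2)
      ((hp.continuous.pow 2).intervalIntegrable _ _)
      ((hp.continuous_deriv_one.pow 2).intervalIntegrable _ _)]
    ring
  have hnonneg : 0 ≤ ∫ φ in (0)..(2 * π), deriv p φ ^ 2 :=
    integral_nonneg two_pi_pos.le fun _ _ => sq_nonneg _
  rw [hAF]
  linarith [neg_le_abs Fe]
end
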